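/- Let W' be the affine Weyl group of type B̃₂ with simple reflections r, s, t satisfying rt = tr, (rs)⁴ = e, (st)⁴ = e, and r² = s² = t² = e. Then for every m ≥ 0 the element rt(srt)^m has length 3m + 2. -/

import Mathlib

/-!
Let `W'` act on the plane by the affine reflections `r`, `s`, `t` in the walls `x = 0`, `x = y`,
`y = 1` of an alcove, and count the walls of the affine arrangement (`x ∈ ℤ`, `y ∈ ℤ`,
`x ± y ∈ 2ℤ`) separating a point from a base point inside the alcove. A simple reflection moves a
regular point across at most one wall, so the count at `w · base` is at most `ℓ(w)`. The element
`srt` acts as a glide reflection whose square is the translation by `(2, -2)`, and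
`rt(srt)^m · base` turns out to be separated from `base` by exactly `3m + 2` walls; the word
`rt(srt)^m` itself gives the upper bound.
-/

/-- The Coxeter matrix of affine type B̃₂ on generators `r = 0`, `s = 1`, `t = 2`,
with `m(r,t) = 2`, `m(r,s) = 4`, `m(s,t) = 4`. -/
def B2affMatrix : CoxeterMatrix (Fin 3) where
  M := !![1, 4, 2; 4, 1, 4; 2, 4, 1]
  off_diagonal := by
    intro i i' h
    fin_cases i <;> fin_cases i' <;> first | exact absurd rfl h | decide | simp

/-- The affine Weyl group of type B̃₂. -/
abbrev B2affGroup := B2affMatrix.Group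

/-- The canonical Coxeter system on the affine Weyl group of type B̃₂. -/
def B2affCS : CoxeterSystem B2affMatrix B2affGroup := B2affMatrix.toCoxeterSystem

namespace B2aff

/-- The simple reflection `r`. -/
def r : B2affGroup := B2affCS.simple 0
/-- The simple reflection `s`. -/
def s : B2affGroup := B2affCS.simple 1
/-- The simple reflection `t`. -/
def t : B2affGroup := B2affCS.simple 2

end B2aff

namespace CoxeterSystem

variable {B W X : Type*} [Group W] {M : CoxeterMatrix B} (cs : CoxeterSystem M W)

theorem length_pow_le (w : W) (n : ℕ) : cs.length (w ^ n) ≤ n * cs.length w := by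
  induction n with
  | zero => simp
  | succ n ih =>
    calc cs.length (w ^ (n + 1)) ≤ cs.length (w ^ n) + cs.length w :=
          pow_succ w n ▸ cs.length_mul_le _ _
      _ ≤ (n + 1) * cs.length w := by rw [add_mul, one_mul]; gcongr

variable {cs} {φ : W →* Equiv.Perm X}

theorem mapsTo_of_forall_simple {S : Set X} (hS : ∀ i, Set.MapsTo (φ (cs.simple i)) S S)
    (w : W) : Set.MapsTo (φ w) S S := by
  induction w using cs.simple_induction_left with
  | one => simpa using Set.mapsTo_id S
  | mul_simple_left w i hw =>
    rw [map_mul, Equiv.Perm.coe_mul]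
    exact (hS i).comp hw

theorem le_add_length_of_forall_simple {S : Set X} (hS : ∀ i, Set.MapsTo (φ (cs.simple i)) S S)
    {N : X → ℕ} (hN : ∀ i, ∀ x ∈ S, N (φ (cs.simple i) x) ≤ N x + 1) (w : W) {x : X}
    (hx : x ∈ S) : N (φ w x) ≤ N x + cs.length w := by
  have word_bound (ω : List B) : N (φ (cs.wordProd ω) x) ≤ N x + ω.length := by
    induction ω with
    | nil => simp
    | cons i ω ih =>
      rw [wordProd_cons, map_mul, Equiv.Perm.mul_apply, List.length_cons]
      grw [hN i _ (mapsTo_of_forall_simple hS _ hx), ih, add_assoc]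
  obtain ⟨ω, hω, rfl⟩ := cs.exists_isReduced w
  rw [hω.eq]
  exact word_bound ω

end CoxeterSystem

namespace B2aff

/- The plane is scaled by 4 so that the reflections and the base point `(1/4, 1/2)` are integral:
the point `(x, y) : ℤ × ℤ` stands for `(x/4, y/4)`. -/
def reflR : Equiv.Perm (ℤ × ℤ) := Function.Involutive.toPerm (fun p ↦ (-p.1, p.2)) fun _ ↦ by simp
def reflS : Equiv.Perm (ℤ × ℤ) := Function.Involutive.toPerm Prod.swap Prod.swap_swap
def reflT : Equiv.Perm (ℤ × ℤ) := Function.Involutive.toPerm (fun p ↦ (p.1, 8 - p.2)) fun _ ↦ by simp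

@[simp] theorem reflR_apply (p : ℤ × ℤ) : reflR p = (-p.1, p.2) := rfl
@[simp] theorem reflS_apply (p : ℤ × ℤ) : reflS p = (p.2, p.1) := rfl
@[simp] theorem reflT_apply (p : ℤ × ℤ) : reflT p = (p.1, 8 - p.2) := rfl

def reflection : Fin 3 → Equiv.Perm (ℤ × ℤ) := ![reflR, reflS, reflT]

theorem isLiftable_reflection : B2affMatrix.IsLiftable reflection := by
  intro i j
  fin_cases i <;> fin_cases j <;> ext p <;>
    simp [B2affMatrix, reflection, pow_succ]

def affineAction : B2affGroup →* Equiv.Perm (ℤ × ℤ) :=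
  B2affCS.lift ⟨reflection, isLiftable_reflection⟩

@[simp]
theorem affineAction_simple (i : Fin 3) : affineAction (B2affCS.simple i) = reflection i :=
  B2affCS.lift_apply_simple isLiftable_reflection i

def offWalls : Set (ℤ × ℤ) := {p | ¬ 4 ∣ p.1 ∧ ¬ 4 ∣ p.2 ∧ ¬ 8 ∣ p.1 + p.2 ∧ ¬ 8 ∣ p.1 - p.2}

/- The summands count, family by family, the walls separating `p` from the base point `(1, 2)`;
the floor divisions count them correctly only for points of `offWalls`. -/
def wallCount (p : ℤ × ℤ) : ℕ :=
  (p.1 / 4).natAbs + (p.2 / 4).natAbs + ((p.1 + p.2) / 8).natAbs + ((p.1 - p.2) / 8 + 1).natAbs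

theorem mapsTo_reflection_offWalls (i : Fin 3) : Set.MapsTo (reflection i) offWalls offWalls := by
  rintro ⟨x, y⟩ ⟨hx, hy, hsum, hdiff⟩
  fin_cases i <;> simp_all [offWalls, reflection] <;> omega

theorem wallCount_reflR_le {x y : ℤ} (hp : (x, y) ∈ offWalls) :
    wallCount (-x, y) ≤ wallCount (x, y) + 1 := by
  obtain ⟨hx, -, hsum, hdiff⟩ := hp
  have hx' : -x / 4 = -(x / 4 + 1) := by omega
  have hsum' : (-x + y) / 8 = -((x - y) / 8 + 1) := by omega
  have hdiff' : (-x - y) / 8 + 1 = -((x + y) / 8) := by omega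
  simp only [wallCount, hx', hsum', hdiff', Int.natAbs_neg]
  omega

theorem wallCount_reflS_le {x y : ℤ} (hp : (x, y) ∈ offWalls) :
    wallCount (y, x) ≤ wallCount (x, y) + 1 := by
  obtain ⟨-, -, -, hdiff⟩ := hp
  have hdiff' : (y - x) / 8 + 1 = -((x - y) / 8 + 1) + 1 := by omega
  simp only [wallCount, add_comm y x, hdiff']
  omega

theorem wallCount_reflT_le {x y : ℤ} (hp : (x, y) ∈ offWalls) :
    wallCount (x, 8 - y) ≤ wallCount (x, y) + 1 := by
  obtain ⟨-, hy, hsum, hdiff⟩ := hp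
  have hy' : (8 - y) / 4 = -(y / 4) + 1 := by omega
  have hsum' : (x + (8 - y)) / 8 = (x - y) / 8 + 1 := by omega
  have hdiff' : (x - (8 - y)) / 8 + 1 = (x + y) / 8 := by omega
  simp only [wallCount, hy', hsum', hdiff']
  omega

theorem wallCount_reflection_le (i : Fin 3) {p : ℤ × ℤ} (hp : p ∈ offWalls) :
    wallCount (reflection i p) ≤ wallCount p + 1 := by
  obtain ⟨x, y⟩ := p
  fin_cases i
  · exact wallCount_reflR_le hp
  · exact wallCount_reflS_le hp
  · exact wallCount_reflT_le hp

theorem wallCount_le_length (w : B2affGroup) :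
    wallCount (affineAction w (1, 2)) ≤ B2affCS.length w := by
  have base_offWalls : ((1, 2) : ℤ × ℤ) ∈ offWalls := by norm_num [offWalls]
  have h := B2affCS.le_add_length_of_forall_simple (φ := affineAction)
    (fun i ↦ affineAction_simple i ▸ mapsTo_reflection_offWalls i)
    (fun i _ ↦ affineAction_simple i ▸ wallCount_reflection_le i) w base_offWalls
  rwa [show wallCount (1, 2) = 0 from rfl, zero_add] at h

theorem affineAction_rt (p : ℤ × ℤ) : affineAction (r * t) p = (-p.1, 8 - p.2) := by
  simp [r, t, reflection]

theorem affineAction_srt (p : ℤ × ℤ) : affineAction (s * r * t) p = (8 - p.2, -p.1) := by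
  simp [r, s, t, reflection]

theorem affineAction_srt_sq (p : ℤ × ℤ) : affineAction ((s * r * t) ^ 2) p = p + (8, -8) := by
  rw [pow_two, map_mul, Equiv.Perm.mul_apply, affineAction_srt, affineAction_srt]
  ext <;> simp only [Prod.fst_add, Prod.snd_add] <;> ring

theorem affineAction_srt_pow_two_mul (k : ℕ) (p : ℤ × ℤ) :
    affineAction ((s * r * t) ^ (2 * k)) p = p + k • (8, -8) := by
  induction k generalizing p with
  | zero => simp
  | succ k ih =>
    rw [pow_mul, pow_succ, map_mul, Equiv.Perm.mul_apply, ← pow_mul, ih, affineAction_srt_sq,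
      succ_nsmul', add_assoc]

theorem wallCount_rt_srt_pow (m : ℕ) :
    wallCount (affineAction (r * t * (s * r * t) ^ m) (1, 2)) = 3 * m + 2 := by
  rw [map_mul, Equiv.Perm.mul_apply, affineAction_rt]
  obtain ⟨k, rfl | rfl⟩ := Nat.even_or_odd' m
  · rw [affineAction_srt_pow_two_mul]
    simp only [wallCount, Prod.smul_mk, Int.nsmul_eq_mul, Prod.mk_add_mk]
    omega
  · rw [pow_succ, map_mul, Equiv.Perm.mul_apply, affineAction_srt, affineAction_srt_pow_two_mul]
    simp only [wallCount, Prod.smul_mk, Int.nsmul_eq_mul, Prod.mk_add_mk]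
    omega

theorem length_srt_le : B2affCS.length (s * r * t) ≤ 3 := by
  simpa [CoxeterSystem.wordProd, r, s, t, mul_assoc] using B2affCS.length_wordProd_le [1, 0, 2]

theorem length_rt_le : B2affCS.length (r * t) ≤ 2 := by
  simpa [CoxeterSystem.wordProd, r, t] using B2affCS.length_wordProd_le [0, 2]

end B2aff

open B2aff in
/-- For every `m ≥ 0`, the element `rt(srt)^m` of the affine Weyl group of type `B̃₂`
has Coxeter length `3m + 2`. -/
theorem length_rt_srt_pow (m : ℕ) :
    B2affCS.length (r * t * (s * r * t) ^ m) = 3 * m + 2 := by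
  apply le_antisymm
  · calc B2affCS.length (r * t * (s * r * t) ^ m)
        ≤ B2affCS.length (r * t) + m * B2affCS.length (s * r * t) :=
          (B2affCS.length_mul_le _ _).trans (by grw [B2affCS.length_pow_le])
      _ ≤ 3 * m + 2 := by grw [length_rt_le, length_srt_le]; omega
  · exact wallCount_rt_srt_pow m ▸ wallCount_le_length _
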